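/- Let G be a ⟨P2P3⟩-free simple graph with G → (3,3)^e that is minimal, i.e., for every edge e of G the graph G − e does not arrow (3,3)^e. Then G is K_4-free. (Theorem 1.1, part 1.) -/
import Mathlib


/-- `G → (3,3)ᵉ`: every 2-coloring of the edges of `G` contains three pairwise adjacent
vertices whose three connecting edges all have the same color. -/
def EdgeArrows33 {V : Type*} (G : SimpleGraph V) : Prop :=
  ∀ c : Sym2 V → Bool, ∃ x y z : V,
    G.Adj x y ∧ G.Adj x z ∧ G.Adj y z ∧
    c s(x, y) = c s(x, z) ∧ c s(x, z) = c s(y, z)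

/-- `G` is `H`-free: `G` contains no (not necessarily induced) subgraph isomorphic to `H`,
i.e. there is no injective graph homomorphism from `H` to `G`. -/
def HFree {W V : Type*} (H : SimpleGraph W) (G : SimpleGraph V) : Prop :=
  ¬ ∃ f : H →g G, Function.Injective f

/-- `P₂ ∪ P₃`: the disjoint union of an edge (`0-1`) and a two-edge path (`2-3-4`). -/
def P2P3 : SimpleGraph (Fin 5) :=
  SimpleGraph.fromRel (fun i j => (i = 0 ∧ j = 1) ∨ (i = 2 ∧ j = 3) ∨ (i = 3 ∧ j = 4))

/-- `⟨P2P3⟩`: the complement of `P₂ ∪ P₃`. -/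
def P2P3bar : SimpleGraph (Fin 5) := P2P3ᶜ

/-- `K₄`, the complete graph on four vertices. -/
def K4 : SimpleGraph (Fin 4) := ⊤

lemma p2p3bar_hom {V : Type*} (G : SimpleGraph V) (u v p t q : V)
    (h1 : G.Adj u p) (h2 : G.Adj u t) (h3 : G.Adj u q)
    (h4 : G.Adj v p) (h5 : G.Adj v t) (h6 : G.Adj v q)
    (h7 : G.Adj p q) (huv : u ≠ v) (hpt : p ≠ t) (htq : t ≠ q) :
    ∃ f : P2P3bar →g G, Function.Injective f := by
  have nup := h1.ne; have nut := h2.ne; have nuq := h3.ne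
  have nvp := h4.ne; have nvt := h5.ne; have nvq := h6.ne
  have npq := h7.ne
  refine ⟨⟨![u, v, p, t, q], ?_⟩, ?_⟩
  · intro i j hij
    fin_cases i <;> fin_cases j <;>
      simp_all [P2P3bar, P2P3, SimpleGraph.fromRel_adj] <;>
      first
        | exact h1 | exact h2 | exact h3 | exact h4 | exact h5 | exact h6 | exact h7
        | exact h1.symm | exact h2.symm | exact h3.symm | exact h4.symm | exact h5.symm
        | exact h6.symm | exact h7.symm
  · intro i j hij
    have hij2 : (![u, v, p, t, q] : Fin 5 → V) i = ![u, v, p, t, q] j := hij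
    clear hij
    fin_cases i <;> fin_cases j <;> simp_all

open Classical in
noncomputable def recolor {V : Type*} (a b c d : V) (co : Sym2 V → Bool) : Sym2 V → Bool :=
  fun e =>
    if e = s(a, b) ∨ e = s(c, d) then true
    else if e = s(a, c) ∨ e = s(a, d) ∨ e = s(b, c) ∨ e = s(b, d) then false
    else co e

theorem stmt_7 {V : Type*} (G : SimpleGraph V) (hfree : HFree P2P3bar G)
    (harr : EdgeArrows33 G)
    (hmin : ∀ e ∈ G.edgeSet, ¬ EdgeArrows33 (G.deleteEdges {e})) :
    HFree K4 G := by
  rintro ⟨f, -⟩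
  obtain ⟨a, b, c, d, hab, hac, had, hbc, hbd, hcd⟩ :
      ∃ a b c d : V, G.Adj a b ∧ G.Adj a c ∧ G.Adj a d ∧ G.Adj b c ∧ G.Adj b d ∧ G.Adj c d :=
    ⟨f 0, f 1, f 2, f 3, f.map_adj (by simp [K4]), f.map_adj (by simp [K4]),
      f.map_adj (by simp [K4]), f.map_adj (by simp [K4]), f.map_adj (by simp [K4]),
      f.map_adj (by simp [K4])⟩
  clear f
  -- common neighbours of pairs of the K4 lie inside the K4
  have key : ∀ u v p q : V, G.Adj u v → G.Adj u p → G.Adj u q → G.Adj v p → G.Adj v q →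
      G.Adj p q → ∀ t, G.Adj t u → G.Adj t v → t = p ∨ t = q := by
    intro u v p q huv hup huq hvp hvq hpq t htu htv
    by_contra h
    push_neg at h
    exact hfree (p2p3bar_hom G u v p t q hup htu.symm huq hvp htv.symm hvq hpq
      huv.ne h.1.symm h.2)
  have hNab := key a b c d hab hac had hbc hbd hcd
  have hNcd := key c d a b hcd hac.symm hbc.symm had.symm hbd.symm hab
  have hNac := key a c b d hac hab had hbc.symm hcd hbd
  have hNad := key a d b c had hab hac hbd.symm hcd.symm hbc
  have hNbc := key b c a d hbc hab.symm hbd hac.symm hcd had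
  have hNbd := key b d a c hbd hab.symm hbc had.symm hcd.symm hac
  -- a good colouring of G minus the edge ab
  have hdel := hmin s(a, b) (G.mem_edgeSet.mpr hab)
  simp only [EdgeArrows33, not_forall, not_exists] at hdel
  obtain ⟨co, hco⟩ := hdel
  -- evaluate the recolouring outside the K4 edges
  have emem : ∀ e : Sym2 V, e ≠ s(a, b) → e ≠ s(c, d) → e ≠ s(a, c) → e ≠ s(a, d) →
      e ≠ s(b, c) → e ≠ s(b, d) → recolor a b c d co e = co e := by
    intro e e1 e2 e3 e4 e5 e6
    simp [recolor, e1, e2, e3, e4, e5, e6]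
  -- a vertex adjacent to two endpoints of a K4 edge lies in the K4
  have hK : ∀ u w t : V, G.Adj t u → G.Adj t w →
      (s(u, w) = s(a, b) ∨ s(u, w) = s(c, d) ∨ s(u, w) = s(a, c) ∨ s(u, w) = s(a, d) ∨
        s(u, w) = s(b, c) ∨ s(u, w) = s(b, d)) →
      (u = a ∨ u = b ∨ u = c ∨ u = d) ∧ (w = a ∨ w = b ∨ w = c ∨ w = d) ∧
        (t = a ∨ t = b ∨ t = c ∨ t = d) := by
    intro u w t htu htw h
    rcases h with h | h | h | h | h | h <;> rw [Sym2.eq_iff] at h <;>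
      rcases h with ⟨hu, hw⟩ | ⟨hu, hw⟩ <;> rw [hu] at htu <;> rw [hw] at htw <;>
      refine ⟨by tauto, by tauto, ?_⟩ <;>
      first
        | (have := hNab t htu htw; tauto)
        | (have := hNab t htw htu; tauto)
        | (have := hNcd t htu htw; tauto)
        | (have := hNcd t htw htu; tauto)
        | (have := hNac t htu htw; tauto)
        | (have := hNac t htw htu; tauto)
        | (have := hNad t htu htw; tauto)
        | (have := hNad t htw htu; tauto)
        | (have := hNbc t htu htw; tauto)
        | (have := hNbc t htw htu; tauto)
        | (have := hNbd t htu htw; tauto)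
        | (have := hNbd t htw htu; tauto)
  -- apply the arrowing hypothesis to the recoloured colouring
  obtain ⟨x, y, z, hxy, hxz, hyz, h1, h2⟩ := harr (recolor a b c d co)
  by_cases H :
      (s(x, y) = s(a, b) ∨ s(x, y) = s(c, d) ∨ s(x, y) = s(a, c) ∨ s(x, y) = s(a, d) ∨
        s(x, y) = s(b, c) ∨ s(x, y) = s(b, d)) ∨
      (s(x, z) = s(a, b) ∨ s(x, z) = s(c, d) ∨ s(x, z) = s(a, c) ∨ s(x, z) = s(a, d) ∨
        s(x, z) = s(b, c) ∨ s(x, z) = s(b, d)) ∨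
      (s(y, z) = s(a, b) ∨ s(y, z) = s(c, d) ∨ s(y, z) = s(a, c) ∨ s(y, z) = s(a, d) ∨
        s(y, z) = s(b, c) ∨ s(y, z) = s(b, d))
  · -- the monochromatic triangle lies inside the K4: contradiction with the recolouring
    have hinK : (x = a ∨ x = b ∨ x = c ∨ x = d) ∧ (y = a ∨ y = b ∨ y = c ∨ y = d) ∧
        (z = a ∨ z = b ∨ z = c ∨ z = d) := by
      rcases H with h | h | h
      · exact hK x y z hxz.symm hyz.symm h
      · obtain ⟨h1', h2', h3'⟩ := hK x z y hxy.symm hyz h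
        exact ⟨h1', h3', h2'⟩
      · obtain ⟨h1', h2', h3'⟩ := hK y z x hxy hxz h
        exact ⟨h3', h1', h2'⟩
    obtain ⟨hx, hy, hz⟩ := hinK
    have nab := hab.ne; have nab' := hab.ne'
    have nac := hac.ne; have nac' := hac.ne'
    have nad := had.ne; have nad' := had.ne'
    have nbc := hbc.ne; have nbc' := hbc.ne'
    have nbd := hbd.ne; have nbd' := hbd.ne'
    have ncd := hcd.ne; have ncd' := hcd.ne'
    have nxy := hxy.ne; have nxz := hxz.ne; have nyz := hyz.ne
    clear hco hmin harr hfree key hK emem H hNab hNcd hNac hNad hNbc hNbd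
    clear hab hac had hbc hbd hcd hxy hxz hyz
    rcases hx with rfl | rfl | rfl | rfl <;> rcases hy with rfl | rfl | rfl | rfl <;>
      rcases hz with rfl | rfl | rfl | rfl <;>
      simp_all [recolor, Sym2.eq_iff]
  · -- the triangle avoids all K4 edges: contradiction with the good colouring
    push_neg at H
    obtain ⟨⟨e1, e2, e3, e4, e5, e6⟩, ⟨f1, f2, f3, f4, f5, f6⟩, ⟨g1, g2, g3, g4, g5, g6⟩⟩ := H
    refine hco x y z ⟨?_, ?_, ?_, ?_, ?_⟩
    · rw [SimpleGraph.deleteEdges_adj]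
      exact ⟨hxy, by simp [e1]⟩
    · rw [SimpleGraph.deleteEdges_adj]
      exact ⟨hxz, by simp [f1]⟩
    · rw [SimpleGraph.deleteEdges_adj]
      exact ⟨hyz, by simp [g1]⟩
    · rw [← emem s(x, y) e1 e2 e3 e4 e5 e6, ← emem s(x, z) f1 f2 f3 f4 f5 f6]
      exact h1
    · rw [← emem s(x, z) f1 f2 f3 f4 f5 f6, ← emem s(y, z) g1 g2 g3 g4 g5 g6]
      exact h2
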